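/- arXiv:2211.16167 — 2 statements merged into one kernel-verified Lean document; each statement's English description precedes it below -/
import Mathlib

section
/- With the same interval construction: for any $i < k$ in $\S$ and any $m < i$, it holds that $\bigcup_{r \le m}\Gamma_{ir}(x) \supset \bigcup_{r \le m}\bar\Gamma_{kr}$ for all $x \in \mathbb{R}^d$. -/
/-!
For `r ≤ m < i < k` both families consist of consecutive intervals starting at `0`, so the left
union lies in `[0, ∑_{l ≤ m} q̄_{kl})` and the right one is `[0, ∑_{l ≤ m} q_{il}(x))`. Since `i`
ranges over `(l, k]`, the infimum defining `q̄_{kl}` is at most `q_{il}(x)`, termwise.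
-/

open Set

/-- The interval `Γ_{ij}(x)` from the Skorokhod-representation construction:
for `j < i` consecutive intervals on `[0,∞)` starting at `0` ordered by
increasing `j`; for `j > i` consecutive intervals on `(-∞,0)` ending at `0`,
with `Γ_{i,i+c_i}` adjacent to `0`. -/
noncomputable def Gam (d : ℕ) (q : ℕ → ℕ → (Fin d → ℝ) → ℝ) (c : ℕ → ℕ)
    (i j : ℕ) (x : Fin d → ℝ) : Set ℝ :=
  if j < i then
    Set.Ico (∑ l ∈ Finset.Ico 1 j, q i l x) (∑ l ∈ Finset.Ico 1 (j + 1), q i l x)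
  else if i < j then
    Set.Ico (-(∑ l ∈ Finset.Icc j (i + c i), q i l x))
      (-(∑ l ∈ Finset.Icc (j + 1) (i + c i), q i l x))
  else ∅

section Gam

variable {d : ℕ} {q : ℕ → ℕ → (Fin d → ℝ) → ℝ} {c : ℕ → ℕ} {i j m : ℕ} {x : Fin d → ℝ}

theorem Gam_of_lt (h : j < i) :
    Gam d q c i j x =
      Ico (∑ l ∈ Finset.Ico 1 j, q i l x) (∑ l ∈ Finset.Ico 1 (j + 1), q i l x) :=
  if_pos h

theorem Gam_subset_Ico_zero (hj : j ≤ m) (hm : m < i)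
    (hnn : ∀ l ∈ Finset.Ico 1 (m + 1), 0 ≤ q i l x) :
    Gam d q c i j x ⊆ Ico 0 (∑ l ∈ Finset.Ico 1 (m + 1), q i l x) := by
  rw [Gam_of_lt (hj.trans_lt hm)]
  have hsub : ∀ n ≤ m + 1, Finset.Ico 1 n ⊆ Finset.Ico 1 (m + 1) :=
    fun n hn => Finset.Ico_subset_Ico_right hn
  refine Ico_subset_Ico ?_ ?_
  · exact Finset.sum_nonneg fun l hl => hnn l (hsub j (by omega) hl)
  · exact Finset.sum_le_sum_of_subset_of_nonneg (hsub (j + 1) (by omega))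
      fun l hl _ => hnn l hl

theorem Ico_zero_subset_biUnion_Gam (hm : m < i) :
    Ico 0 (∑ l ∈ Finset.Ico 1 (m + 1), q i l x) ⊆ ⋃ r ∈ {r : ℕ | r ≤ m}, Gam d q c i r x := by
  intro y hy
  obtain ⟨r, hr, hyr⟩ := mem_iUnion₂.mp <|
    Ico_subset_biUnion_Ico (m + 1) (fun n => ∑ l ∈ Finset.Ico 1 n, q i l x) (by simpa using hy)
  have hrm : r ≤ m := Nat.lt_succ_iff.mp (Finset.mem_range.mp hr)
  exact mem_biUnion (x := r) hrm (by rwa [Gam_of_lt (hrm.trans_lt hm)])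

end Gam

theorem sInf_rates_into_mem_Icc {d : ℕ} {q : ℕ → ℕ → (Fin d → ℝ) → ℝ} {i j k : ℕ}
    (hnn : ∀ i j x, i ≠ j → 0 ≤ q i j x) (hji : j < i) (hik : i ≤ k) (x : Fin d → ℝ) :
    sInf {r : ℝ | ∃ l x, j < l ∧ l ≤ k ∧ r = q l j x} ∈ Icc 0 (q i j x) := by
  have hmem : q i j x ∈ {r : ℝ | ∃ l x, j < l ∧ l ≤ k ∧ r = q l j x} := ⟨i, x, hji, hik, rfl⟩
  have hpos : ∀ r ∈ {r : ℝ | ∃ l x, j < l ∧ l ≤ k ∧ r = q l j x}, 0 ≤ r := by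
    rintro r ⟨l, x', hjl, -, rfl⟩
    exact hnn l j x' hjl.ne'
  exact ⟨le_csInf ⟨_, hmem⟩ hpos, csInf_le ⟨0, hpos⟩ hmem⟩

theorem stmt_2_general (d : ℕ) (q : ℕ → ℕ → (Fin d → ℝ) → ℝ) (c cbar : ℕ → ℕ)
    (qbar : ℕ → ℕ → ℝ)
    (hnn : ∀ i j x, i ≠ j → 0 ≤ q i j x)
    (hbar_lt : ∀ j k, j < k →
      qbar k j = sInf {r : ℝ | ∃ l x, j < l ∧ l ≤ k ∧ r = q l j x})
    (i k : ℕ) (hik : i < k)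
    (m : ℕ) (hm : m < i) (x : Fin d → ℝ) :
    (⋃ r ∈ {r : ℕ | r ≤ m}, Gam d (fun a b _ => qbar a b) cbar k r x) ⊆
      ⋃ r ∈ {r : ℕ | r ≤ m}, Gam d q c i r x := by
  have hqbar : ∀ l ∈ Finset.Ico 1 (m + 1), qbar k l ∈ Icc 0 (q i l x) := by
    intro l hl
    have hli : l < i := by rw [Finset.mem_Ico] at hl; omega
    rw [hbar_lt l k (hli.trans hik)]
    exact sInf_rates_into_mem_Icc hnn hli hik.le x
  calc ⋃ r ∈ {r : ℕ | r ≤ m}, Gam d (fun a b _ => qbar a b) cbar k r x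
      ⊆ Ico 0 (∑ l ∈ Finset.Ico 1 (m + 1), qbar k l) :=
        iUnion₂_subset fun r hr =>
          Gam_subset_Ico_zero hr (hm.trans hik) fun l hl => (hqbar l hl).1
    _ ⊆ Ico 0 (∑ l ∈ Finset.Ico 1 (m + 1), q i l x) :=
        Ico_subset_Ico_right (Finset.sum_le_sum fun l hl => (hqbar l hl).2)
    _ ⊆ ⋃ r ∈ {r : ℕ | r ≤ m}, Gam d q c i r x := Ico_zero_subset_biUnion_Gam hm

/-- for `i < k` and `m < i`, `⋃_{r ≤ m} Γ_{ir}(x) ⊇ ⋃_{r ≤ m} Γ̄_{kr}`. -/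
theorem stmt_2 (d N : ℕ) (q : ℕ → ℕ → (Fin d → ℝ) → ℝ) (c cbar : ℕ → ℕ) (K₀ : ℝ)
    (qbar : ℕ → ℕ → ℝ)
    (hnn : ∀ i j x, i ≠ j → 0 ≤ q i j x)
    (hdiag : ∀ i x, |q i i x| ≤ K₀)
    (hub : ∀ i j x, q i j x ≤ K₀)
    (hrange : ∀ i j x, (i + c i < j ∨ j + c j < i) → q i j x = 0)
    (hrangebar : ∀ i j, (i + cbar i < j ∨ j + cbar j < i) → qbar i j = 0)
    (hbar_lt : ∀ j k, j < k →
      qbar k j = sInf {r : ℝ | ∃ l x, j < l ∧ l ≤ k ∧ r = q l j x})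
    (hbar_gt : ∀ j k, k < j →
      qbar k j = sSup {r : ℝ | ∃ l x, 1 ≤ l ∧ l ≤ k ∧ r = q l j x})
    (i k : ℕ) (hi : 1 ≤ i) (hik : i < k) (hkN : k ≤ N)
    (m : ℕ) (hm : m < i) (x : Fin d → ℝ) :
    (⋃ r ∈ {r : ℕ | r ≤ m}, Gam d (fun a b _ => qbar a b) cbar k r x) ⊆
      ⋃ r ∈ {r : ℕ | r ≤ m}, Gam d q c i r x :=
  stmt_2_general d q c cbar qbar hnn hbar_lt i k hik m hm x
end

section
/- Suppose $\pi$ and $\tilde\pi$ are probability measures on a countable set $\S$, $P_s h(i_0)$ and $\tilde P_s h(i_0)$ are real-valued functions of $s \ge 0$ such that for every function $h: \S \to \mathbb{R}$ with $\sup_i |h_i| \le 1$ and every $s \ge 0$: $|P_s h(i_0) - \pi(h)| \le \eta_s$, $|\tilde P_s h(i_0) - \tilde\pi(h)| \le \eta_s$, and $\frac{1}{t}\bigl|\int_0^t (P_s h(i_0) - \tilde P_s h(i_0))\,ds\bigr| \le Dt$ for all $t>0$, where $\eta: [0,\infty) \to [0,2]$ with $E := \int_0^\infty \eta_s ds < \infty$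 and $D > 0$. Then $\|\pi - \tilde\pi\|_{var} := \sup_{\sup|h| \le 1}|\pi(h) - \tilde\pi(h)| \le 2\sqrt{2}\,\sqrt{E}\,\sqrt{D}$. -/
/-!
Average over the time window `(0, t]`: since `P_s h(i₀)` and `P̃_s h(i₀)` stay within `η_s` of
`π(h)` and `π̃(h)`, integrating gives `t |π(h) - π̃(h)| ≤ 2E + |∫₀ᵗ (P_s h - P̃_s h) ds| ≤ 2E + D t²`.
Dividing by `t` and minimising `2E/t + D t` over `t > 0` yields `2 √(2E) √D`.
-/

open MeasureTheory Set

/-- The minimiser `t = √a / √b` is perturbed to `t = (√a + ε) / √b` so that `a = 0` is covered. -/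
lemma le_two_mul_sqrt_mul_sqrt_of_forall_le {a b X : ℝ} (ha : 0 ≤ a) (hb : 0 < b)
    (h : ∀ t, 0 < t → X ≤ a / t + b * t) :
    X ≤ 2 * Real.sqrt a * Real.sqrt b := by
  have hsb : 0 < Real.sqrt b := Real.sqrt_pos.mpr hb
  have hsa : 0 ≤ Real.sqrt a := Real.sqrt_nonneg a
  refine le_of_forall_pos_le_add fun δ hδ => ?_
  set ε := δ / Real.sqrt b
  have hε : 0 < ε := div_pos hδ hsb
  have hpos : 0 < Real.sqrt a + ε := by positivity
  have ha_div : a / (Real.sqrt a + ε) ≤ Real.sqrt a := by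
    rw [div_le_iff₀ hpos]
    nlinarith [Real.mul_self_sqrt ha]
  calc X ≤ a / ((Real.sqrt a + ε) / Real.sqrt b) + b * ((Real.sqrt a + ε) / Real.sqrt b) :=
        h _ (div_pos hpos hsb)
    _ = a / (Real.sqrt a + ε) * Real.sqrt b + Real.sqrt b * (Real.sqrt a + ε) := by
        field_simp
        rw [Real.sq_sqrt hb.le]
        ring
    _ ≤ Real.sqrt a * Real.sqrt b + Real.sqrt b * (Real.sqrt a + ε) := by gcongr
    _ = 2 * Real.sqrt a * Real.sqrt b + δ := by
        rw [mul_add, mul_div_cancel₀ _ hsb.ne']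
        ring

lemma measureReal_univ_mul_abs_sub_le {α : Type*} [MeasurableSpace α] {μ : Measure α}
    [IsFiniteMeasure μ] {f g η : α → ℝ} {a b : ℝ}
    (hfg : Integrable (fun x => f x - g x) μ) (hη : Integrable η μ)
    (hfa : ∀ᵐ x ∂μ, |f x - a| ≤ η x) (hgb : ∀ᵐ x ∂μ, |g x - b| ≤ η x) :
    μ.real univ * |a - b| ≤ 2 * ∫ x, η x ∂μ + |∫ x, (f x - g x) ∂μ| := by
  have key : |∫ _ : α, (a - b) ∂μ - ∫ x, (f x - g x) ∂μ| ≤ ∫ x, 2 * η x ∂μ := by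
    rw [← integral_sub (integrable_const (a - b)) hfg, ← Real.norm_eq_abs]
    refine norm_integral_le_of_norm_le (hη.const_mul 2) ?_
    filter_upwards [hfa, hgb] with x hxa hxb
    rw [Real.norm_eq_abs, abs_le]
    rw [abs_le] at hxa hxb
    constructor <;> linarith [hxa.1, hxa.2, hxb.1, hxb.2]
  rw [integral_const, smul_eq_mul, integral_const_mul] at key
  have habs : |μ.real univ * (a - b)| = μ.real univ * |a - b| := by
    rw [abs_mul, abs_of_nonneg measureReal_nonneg]
  linarith [abs_sub_abs_le_abs_sub (μ.real univ * (a - b)) (∫ x, (f x - g x) ∂μ)]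

theorem stmt_7_general {S : Type*} (π πt : S → ℝ)
    (P Pt : (S → ℝ) → ℝ → ℝ) (η : ℝ → ℝ) (D : ℝ) (hD : 0 < D)
    (hη : ∀ s, 0 ≤ η s ∧ η s ≤ 2)
    (hηint : IntegrableOn η (Set.Ici 0))
    (hPint : ∀ (h : S → ℝ) (t : ℝ), 0 < t → IntegrableOn (P h) (Set.Ioc 0 t))
    (hPtint : ∀ (h : S → ℝ) (t : ℝ), 0 < t → IntegrableOn (Pt h) (Set.Ioc 0 t))
    (hP : ∀ h : S → ℝ, (∀ i, |h i| ≤ 1) → ∀ s, 0 ≤ s →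
      |P h s - ∑' i, π i * h i| ≤ η s)
    (hPt : ∀ h : S → ℝ, (∀ i, |h i| ≤ 1) → ∀ s, 0 ≤ s →
      |Pt h s - ∑' i, πt i * h i| ≤ η s)
    (hdiff : ∀ h : S → ℝ, (∀ i, |h i| ≤ 1) → ∀ t : ℝ, 0 < t →
      (1 / t) * |∫ s in Set.Ioc (0 : ℝ) t, (P h s - Pt h s)| ≤ D * t) :
    ∀ h : S → ℝ, (∀ i, |h i| ≤ 1) →
      |(∑' i, π i * h i) - ∑' i, πt i * h i| ≤
        2 * Real.sqrt 2 * Real.sqrt (∫ s in Set.Ici (0 : ℝ), η s) * Real.sqrt D := by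
  intro h hh
  have hE : 0 ≤ ∫ s in Ici (0 : ℝ), η s := setIntegral_nonneg measurableSet_Ici fun s _ => (hη s).1
  rw [mul_assoc 2, ← Real.sqrt_mul zero_le_two]
  refine le_two_mul_sqrt_mul_sqrt_of_forall_le (by positivity) hD fun t ht => ?_
  have hsub : Ioc 0 t ⊆ Ici (0 : ℝ) := Ioc_subset_Ioi_self.trans Ioi_subset_Ici_self
  have hηt : ∫ s in Ioc 0 t, η s ≤ ∫ s in Ici 0, η s :=
    setIntegral_mono_set hηint (.of_forall fun s => (hη s).1) hsub.eventuallyLE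
  have havg := measureReal_univ_mul_abs_sub_le (μ := volume.restrict (Ioc 0 t))
    ((hPint h t ht).sub (hPtint h t ht)) (hηint.mono_set hsub)
    (ae_restrict_of_forall_mem measurableSet_Ioc fun s hs => hP h hh s hs.1.le)
    (ae_restrict_of_forall_mem measurableSet_Ioc fun s hs => hPt h hh s hs.1.le)
  have hvol : (volume.restrict (Ioc (0 : ℝ) t)).real univ = t := by simp [ht.le]
  have hdt := hdiff h hh t ht
  rw [hvol] at havg
  rw [one_div, inv_mul_le_iff₀ ht] at hdt
  rw [div_add' _ _ _ ht.ne', le_div_iff₀ ht]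
  nlinarith

/-- Corollary 3.3: perturbation bound for invariant measures.
`π(h) = ∑' i, π i * h i`; the hypotheses encode `|P_s h(i₀) - π(h)| ≤ η_s`,
`|P̃_s h(i₀) - π̃(h)| ≤ η_s` and `(1/t)|∫_0^t (P_s h - P̃_s h) ds| ≤ D t`, and the
conclusion is `‖π - π̃‖_var ≤ 2√2 √(∫_0^∞ η) √D`. -/
theorem stmt_7 {S : Type*} [Countable S] (i0 : S) (π πt : S → ℝ)
    (hπ0 : ∀ i, 0 ≤ π i) (hπt0 : ∀ i, 0 ≤ πt i)
    (hπs : Summable π) (hπts : Summable πt)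
    (hπ1 : ∑' i, π i = 1) (hπt1 : ∑' i, πt i = 1)
    (P Pt : (S → ℝ) → ℝ → ℝ) (η : ℝ → ℝ) (D : ℝ) (hD : 0 < D)
    (hη : ∀ s, 0 ≤ η s ∧ η s ≤ 2)
    (hηint : IntegrableOn η (Set.Ici 0))
    (hPint : ∀ (h : S → ℝ) (t : ℝ), 0 < t → IntegrableOn (P h) (Set.Ioc 0 t))
    (hPtint : ∀ (h : S → ℝ) (t : ℝ), 0 < t → IntegrableOn (Pt h) (Set.Ioc 0 t))
    (hP : ∀ h : S → ℝ, (∀ i, |h i| ≤ 1) → ∀ s, 0 ≤ s →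
      |P h s - ∑' i, π i * h i| ≤ η s)
    (hPt : ∀ h : S → ℝ, (∀ i, |h i| ≤ 1) → ∀ s, 0 ≤ s →
      |Pt h s - ∑' i, πt i * h i| ≤ η s)
    (hdiff : ∀ h : S → ℝ, (∀ i, |h i| ≤ 1) → ∀ t : ℝ, 0 < t →
      (1 / t) * |∫ s in Set.Ioc (0 : ℝ) t, (P h s - Pt h s)| ≤ D * t) :
    ∀ h : S → ℝ, (∀ i, |h i| ≤ 1) →
      |(∑' i, π i * h i) - ∑' i, πt i * h i| ≤
        2 * Real.sqrt 2 * Real.sqrt (∫ s in Set.Ici (0 : ℝ), η s) * Real.sqrt D :=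
  stmt_7_general π πt P Pt η D hD hη hηint hPint hPtint hP hPt hdiff
end
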